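/- Let t : Fin T → ℝ be a vector with nonnegative entries and let ε > 0. Define M = max_i t_i, assume there exists j with t_j ≥ ε, and define the mask m_i = M + ε if t_i < ε and m_i = 0 otherwise. Then min_i m_i = 0 and min_i (t_i + m_i) − min_i m_i = min { t_i : t_i ≥ ε }, i.e., the masked minimum recovers the smallest 'active' entry of t. -/
import Mathlib


/-- The masked minimum recovers the smallest 'active' entry: with
`m_i = (max t + ε)·1[t_i < ε]`, we have `min m = 0` and
`min (t + m) − min m = min { t_i : t_i ≥ ε }`. -/
theorem masked_min_recovers_start (T : ℕ) (hT : 0 < T) (t : Fin T → ℝ)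
    (ht : ∀ i, 0 ≤ t i) (ε : ℝ) (hε : 0 < ε) (hj : ∃ j, ε ≤ t j)
    (M : ℝ) (hM : M = Finset.univ.sup' ⟨⟨0, hT⟩, Finset.mem_univ _⟩ t)
    (m : Fin T → ℝ) (hm : ∀ i, m i = if t i < ε then M + ε else 0) :
    Finset.univ.inf' ⟨⟨0, hT⟩, Finset.mem_univ _⟩ m = 0 ∧
    Finset.univ.inf' ⟨⟨0, hT⟩, Finset.mem_univ _⟩ (fun i => t i + m i) -
        Finset.univ.inf' ⟨⟨0, hT⟩, Finset.mem_univ _⟩ m =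
      (Finset.univ.filter fun i => ε ≤ t i).inf'
        (by obtain ⟨j, hj'⟩ := hj; exact ⟨j, by simp [hj']⟩) t := by
  obtain ⟨j, hjε⟩ := hj
  have hne : (Finset.univ : Finset (Fin T)).Nonempty := ⟨⟨0, hT⟩, Finset.mem_univ _⟩
  have hmj : m j = 0 := by rw [hm]; simp [not_lt.mpr hjε]
  have hM0 : 0 ≤ M := by
    rw [hM]; exact le_trans (ht j) (Finset.le_sup' t (Finset.mem_univ j))
  have hmnn : ∀ i, 0 ≤ m i := by
    intro i; rw [hm]; split
    · positivity
    · exact le_refl 0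
  have h1 : Finset.univ.inf' ⟨⟨0, hT⟩, Finset.mem_univ _⟩ m = 0 := by
    apply le_antisymm
    · calc _ ≤ m j := Finset.inf'_le m (Finset.mem_univ j)
        _ = 0 := hmj
    · exact Finset.le_inf' _ _ fun i _ => hmnn i
  refine ⟨h1, ?_⟩
  rw [h1, sub_zero]
  apply le_antisymm
  · apply Finset.le_inf'
    intro i hi
    rw [Finset.mem_filter] at hi
    have : m i = 0 := by rw [hm]; simp [not_lt.mpr hi.2]
    calc Finset.univ.inf' _ (fun i => t i + m i) ≤ t i + m i :=
          Finset.inf'_le _ (Finset.mem_univ i)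
      _ = t i := by rw [this, add_zero]
  · apply Finset.le_inf'
    intro i _
    by_cases hcase : t i < ε
    · have hmi : m i = M + ε := by rw [hm]; simp [hcase]
      have hle : (Finset.univ.filter fun i => ε ≤ t i).inf'
          (⟨j, by simp [hjε]⟩) t ≤ t j :=
        Finset.inf'_le t (by simp [hjε])
      have htjM : t j ≤ M := by
        rw [hM]; exact Finset.le_sup' t (Finset.mem_univ j)
      have : t j ≤ t i + m i := by
        rw [hmi]; nlinarith [ht i]
      linarith
    · have hmi : m i = 0 := by rw [hm]; simp [hcase]
      rw [hmi, add_zero]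
      exact Finset.inf'_le t (by simp [not_lt.mp hcase])
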